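/- For m > 0, the function ψ(p,k,q) = ω_p + E_{k+q−p} − E_k − ω_q, where E_l = sqrt(|l|²+m²) and ω_l = |l|, has no point (p,k,q) with p ≠ 0 at which all partial derivatives with respect to the components of p and k vanish simultaneously. -/

import Mathlib

/-!
The partial derivative of `ψ` in `p`, taken in the direction `p` itself, is
`‖p‖ - ⟪l, p⟫ / E l` with `l = k + q - p`. By Cauchy–Schwarz `⟪l, p⟫ ≤ ‖l‖ ‖p‖`, and
`‖l‖ < E l` because the mass is nonzero, so this derivative is strictly positive.
-/

noncomputable def E (m : ℝ) (l : EuclideanSpace ℝ (Fin 3)) : ℝ :=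
  Real.sqrt (‖l‖ ^ 2 + m ^ 2)

open RealInnerProductSpace

section InnerProductSpace

variable {F : Type*} [NormedAddCommGroup F] [InnerProductSpace ℝ F]

theorem hasFDerivAt_sqrt_norm_sq_add {c : ℝ} {x : F} (hx : 0 < ‖x‖ ^ 2 + c) :
    HasFDerivAt (fun y : F => √(‖y‖ ^ 2 + c)) ((√(‖x‖ ^ 2 + c))⁻¹ • innerSL ℝ x) x := by
  convert ((hasStrictFDerivAt_norm_sq x).hasFDerivAt.add_const c).sqrt hx.ne' using 1
  ext v
  simp only [smul_apply, innerSL_apply_apply, smul_eq_mul, nsmul_eq_mul]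
  have : √(‖x‖ ^ 2 + c) ≠ 0 := (Real.sqrt_pos.2 hx).ne'
  field_simp
  ring

theorem hasFDerivAt_norm_of_ne_zero {x : F} (hx : x ≠ 0) :
    HasFDerivAt (‖·‖) (‖x‖⁻¹ • innerSL ℝ x) x := by
  simpa [Real.sqrt_sq (norm_nonneg _)] using
    hasFDerivAt_sqrt_norm_sq_add (c := 0) (x := x)
      (by rw [add_zero]; exact pow_pos (norm_pos_iff.2 hx) 2)

end InnerProductSpace

local notation "V" => EuclideanSpace ℝ (Fin 3)

theorem norm_lt_E {m : ℝ} (hm : m ≠ 0) (l : V) : ‖l‖ < E m l := by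
  rw [E, Real.lt_sqrt (norm_nonneg l)]
  exact lt_add_of_pos_right (‖l‖ ^ 2) (sq_pos_of_ne_zero hm)

theorem hasFDerivAt_E {m : ℝ} (hm : m ≠ 0) (l : V) :
    HasFDerivAt (E m) ((E m l)⁻¹ • innerSL ℝ l) l :=
  hasFDerivAt_sqrt_norm_sq_add (by positivity)

theorem inner_lt_E_mul_norm {m : ℝ} (hm : m ≠ 0) (l : V) {p : V} (hp : p ≠ 0) :
    ⟪l, p⟫ < E m l * ‖p‖ :=
  (real_inner_le_norm l p).trans_lt <|
    mul_lt_mul_of_pos_right (norm_lt_E hm l) (norm_pos_iff.2 hp)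

theorem fderiv_psi_apply_left {m : ℝ} (hm : m ≠ 0) {p : V} (hp : p ≠ 0) (k q v : V) :
    fderiv ℝ (fun x : V × V => ‖x.1‖ + E m (x.2 + q - x.1) - E m x.2 - ‖q‖) (p, k) (v, 0)
      = ‖p‖⁻¹ * ⟪p, v⟫ - (E m (k + q - p))⁻¹ * ⟪k + q - p, v⟫ := by
  have h₁ : HasFDerivAt (fun x : V × V => ‖x.1‖) _ (p, k) :=
    (hasFDerivAt_norm_of_ne_zero hp).comp (p, k) hasFDerivAt_fst
  have hl : HasFDerivAt (𝕜 := ℝ) (fun x : V × V => x.2 + q - x.1) _ (p, k) :=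
    (hasFDerivAt_snd.add_const q).sub hasFDerivAt_fst
  have h₂ : HasFDerivAt (fun x : V × V => E m (x.2 + q - x.1)) _ (p, k) :=
    (hasFDerivAt_E hm (k + q - p)).comp (g := E m) (p, k) hl
  have h₃ : HasFDerivAt (fun x : V × V => E m x.2) _ (p, k) :=
    (hasFDerivAt_E hm k).comp (g := E m) (p, k) hasFDerivAt_snd
  have h : HasFDerivAt (fun x : V × V => ‖x.1‖ + E m (x.2 + q - x.1) - E m x.2 - ‖q‖) _ (p, k) :=
    ((h₁.add h₂).sub h₃).sub_const ‖q‖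
  rw [h.fderiv]
  simp only [sub_apply, add_apply, ContinuousLinearMap.comp_apply, smul_apply,
    ContinuousLinearMap.coe_fst', ContinuousLinearMap.coe_snd', innerSL_apply_apply, smul_eq_mul,
    inner_zero_right, zero_sub, inner_neg_right]
  ring

theorem stmt_7 (m : ℝ) (hm : 0 < m) (q : EuclideanSpace ℝ (Fin 3)) :
    ¬ ∃ p k : EuclideanSpace ℝ (Fin 3), p ≠ 0 ∧
      fderiv ℝ (fun x : EuclideanSpace ℝ (Fin 3) × EuclideanSpace ℝ (Fin 3) =>
        ‖x.1‖ + E m (x.2 + q - x.1) - E m x.2 - ‖q‖) (p, k) = 0 := by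
  rintro ⟨p, k, hp, hψ⟩
  have hψp := fderiv_psi_apply_left hm.ne' hp k q p
  rw [hψ, zero_apply, real_inner_self_eq_norm_sq] at hψp
  have hlt := inner_lt_E_mul_norm hm.ne' (k + q - p) hp
  have hE_pos := (norm_nonneg _).trans_lt (norm_lt_E hm.ne' (k + q - p))
  have hp_pos := norm_pos_iff.2 hp
  field_simp at hψp
  linarith
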